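/- arXiv:1507.02906 — 4 statements merged into one kernel-verified Lean document; each statement's English description precedes it below -/
import Mathlib

section
/- Luo's explicit formula: define ν̃(t,x) = ν̃₀(xe^t/(1+x(e^t−1)))·e^{t−λ∫₀ᵗh(s)ds}·(1+x(e^t−1))^{λ−2} where h(t)=∫₀¹ y ν̃(t,y)dy. If ν̃₀ is continuous and there exists x₀ < 1 with ν̃₀(y)=0 for all y ∈ [x₀,1], then for every ε > 0 and every x ≥ ε, ν̃(t,x) = 0 for all sufficiently large t. -/
open Real Filter Topology Set

/-!
`ν̃(t, x)` reads `ν̃₀` at `φₜ(x) = x eᵗ / (1 + x (eᵗ - 1))`, the time-`t` logistic flow of `x`,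
and `1 - φₜ(x) = (1 - x) / (1 + x (eᵗ - 1)) ≤ 1 / (1 + ε (eᵗ - 1)) → 0` uniformly in `x ∈ [ε, 1]`.
Hence for large `t` the map `φₜ` sends `[ε, 1]` into `[x₀, 1]`, where `ν̃₀` vanishes.
-/

noncomputable def logisticFlow (t x : ℝ) : ℝ := x * exp t / (1 + x * (exp t - 1))

lemma logisticFlow_denom_pos {x : ℝ} (t : ℝ) (hx0 : 0 ≤ x) (hx1 : x ≤ 1) :
    0 < 1 + x * (exp t - 1) := by
  have := exp_pos t
  rcases hx0.eq_or_lt with rfl | hx0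
  · simp
  · nlinarith [mul_pos hx0 this]

lemma one_sub_logisticFlow {x : ℝ} (t : ℝ) (hx0 : 0 ≤ x) (hx1 : x ≤ 1) :
    1 - logisticFlow t x = (1 - x) / (1 + x * (exp t - 1)) := by
  have hD := logisticFlow_denom_pos t hx0 hx1
  rw [logisticFlow, eq_div_iff hD.ne', sub_mul, div_mul_cancel₀ _ hD.ne']
  ring

lemma logisticFlow_le_one {x : ℝ} (t : ℝ) (hx0 : 0 ≤ x) (hx1 : x ≤ 1) :
    logisticFlow t x ≤ 1 := by
  have h := one_sub_logisticFlow t hx0 hx1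
  have : 0 ≤ (1 - x) / (1 + x * (exp t - 1)) :=
    div_nonneg (by linarith) (logisticFlow_denom_pos t hx0 hx1).le
  linarith

lemma one_sub_logisticFlow_le {ε x t : ℝ} (hε : 0 < ε) (hεx : ε ≤ x) (hx1 : x ≤ 1)
    (ht : 0 ≤ t) : 1 - logisticFlow t x ≤ 1 / (1 + ε * (exp t - 1)) := by
  have het : 0 ≤ exp t - 1 := by linarith [one_le_exp ht]
  rw [one_sub_logisticFlow t (hε.le.trans hεx) hx1]
  gcongr
  linarith

lemma tendsto_one_div_one_add_mul_exp_sub_one {ε : ℝ} (hε : 0 < ε) :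
    Tendsto (fun t => 1 / (1 + ε * (exp t - 1))) atTop (𝓝 0) := by
  simp only [one_div]
  refine tendsto_inv_atTop_zero.comp (tendsto_atTop_add_const_left _ _ ?_)
  exact (tendsto_atTop_add_const_right _ _ tendsto_exp_atTop).const_mul_atTop hε

lemma eventually_logisticFlow_mem_Icc {ε x₀ : ℝ} (hε : 0 < ε) (hx₀ : x₀ < 1) :
    ∀ᶠ t in atTop, ∀ x ∈ Icc ε 1, logisticFlow t x ∈ Icc x₀ 1 := by
  filter_upwards [eventually_ge_atTop 0,
    (tendsto_one_div_one_add_mul_exp_sub_one hε).eventually (gt_mem_nhds (sub_pos.2 hx₀))]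
    with t ht hsmall x ⟨hεx, hx1⟩
  exact ⟨by linarith [one_sub_logisticFlow_le hε hεx hx1 ht],
    logisticFlow_le_one t (hε.le.trans hεx) hx1⟩

theorem stmt7_general (ν₀ : ℝ → ℝ) (x₀ : ℝ) (hx₀ : x₀ < 1)
    (hzero : ∀ y ∈ Set.Icc x₀ 1, ν₀ y = 0) (lam : ℝ) (h : ℝ → ℝ) :
    ∀ ε : ℝ, 0 < ε → ∃ t₀ : ℝ, ∀ t : ℝ, t₀ ≤ t → ∀ x : ℝ, ε ≤ x → x ≤ 1 →
      ν₀ (x * Real.exp t / (1 + x * (Real.exp t - 1))) *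
        Real.exp (t - lam * ∫ s in (0:ℝ)..t, h s) *
        (1 + x * (Real.exp t - 1)) ^ (lam - 2) = 0 := by
  intro ε hε
  obtain ⟨t₀, ht₀⟩ := eventually_atTop.1 (eventually_logisticFlow_mem_Icc hε hx₀)
  refine ⟨t₀, fun t ht x hεx hx1 => ?_⟩
  have hν : ν₀ (logisticFlow t x) = 0 := hzero _ (ht₀ t ht x ⟨hεx, hx1⟩)
  rw [logisticFlow] at hν
  rw [hν, zero_mul, zero_mul]

/-- Luo's explicit formula.  If ν̃₀ is continuous and vanishes on
[x₀,1] for some x₀ < 1, then for every ε > 0 and every x ∈ [ε,1], the solution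
ν̃(t,x) = ν̃₀(xe^t/(1+x(e^t−1)))·e^{t−λ∫₀ᵗh}·(1+x(e^t−1))^{λ−2} vanishes for all
sufficiently large t. -/
theorem stmt7 (ν₀ : ℝ → ℝ) (hν₀ : Continuous ν₀) (x₀ : ℝ) (hx₀ : x₀ < 1)
    (hzero : ∀ y ∈ Set.Icc x₀ 1, ν₀ y = 0) (lam : ℝ) (h : ℝ → ℝ) :
    ∀ ε : ℝ, 0 < ε → ∃ t₀ : ℝ, ∀ t : ℝ, t₀ ≤ t → ∀ x : ℝ, ε ≤ x → x ≤ 1 →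
      ν₀ (x * Real.exp t / (1 + x * (Real.exp t - 1))) *
        Real.exp (t - lam * ∫ s in (0:ℝ)..t, h s) *
        (1 + x * (Real.exp t - 1)) ^ (lam - 2) = 0 :=
  stmt7_general ν₀ x₀ hx₀ hzero lam h
end

section
/- For λ > 0, λ ≠ 1, define ν̃(t,x) = [(e^t−1)(λ−1)/(e^{t(λ−1)}−1)]·(1+x(e^t−1))^{λ−2} on [0,1]. If λ < 1 then ∫₀¹ x·ν̃(t,x)dx → 0 as t → ∞; if λ > 1 then ν̃(t,1) → λ−1 and ∫₀¹ x·ν̃(t,x)dx → (λ−1)/λ as t → ∞. -/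
open Filter MeasureTheory
open Real Topology

/-! With `X = eᵗ` and `E = e^{t(λ-1)}` the `x`-integral is elementary:
`∫₀¹ x ν̃(t,x) dx = (λ-1)/λ · (XE - 1)/((X-1)(E-1)) - 1/(X-1)` and
`ν̃(t,1) = (λ-1)(1 - 1/X)/(1 - 1/E)`. As `t → ∞`, `X → ∞`, while `E → 0` for `λ < 1` and
`E → ∞` for `λ > 1`; this gives the limits. -/

theorem integral_mul_one_add_mul_rpow {a p : ℝ} (ha₀ : a ≠ 0) (ha : -1 < a) (hp₀ : p ≠ 0)
    (hp₁ : p ≠ 1) :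
    ∫ x in (0:ℝ)..1, x * (1 + x * a) ^ (p - 2)
      = ((1 + a) ^ p - 1) / (a ^ 2 * p) - ((1 + a) ^ (p - 1) - 1) / (a ^ 2 * (p - 1)) := by
  have hpos : ∀ x ∈ Set.uIcc (0:ℝ) 1, 0 < 1 + x * a := by
    intro x hx
    rw [Set.uIcc_of_le zero_le_one] at hx
    rcases le_total 0 a with h | h
    · nlinarith [mul_nonneg hx.1 h]
    · nlinarith [mul_nonneg (sub_nonneg.2 hx.2) (neg_nonneg.2 h)]
  have hderiv : ∀ x ∈ Set.uIcc (0:ℝ) 1, HasDerivAt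
      (fun x ↦ (1 + x * a) ^ p / (a ^ 2 * p) - (1 + x * a) ^ (p - 1) / (a ^ 2 * (p - 1)))
      (x * (1 + x * a) ^ (p - 2)) x := by
    intro x hx
    have hx₀ := (hpos x hx).ne'
    have hlin : HasDerivAt (fun x ↦ 1 + x * a) a x := by
      simpa using ((hasDerivAt_id x).mul_const a).const_add 1
    have h₁ := (Real.hasDerivAt_rpow_const (p := p) (Or.inl hx₀)).comp x hlin
    have h₂ := (Real.hasDerivAt_rpow_const (p := p - 1) (Or.inl hx₀)).comp x hlin
    refine ((h₁.div_const _).sub (h₂.div_const _)).congr_deriv ?_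
    have hsplit : (1 + x * a) ^ (p - 1) = (1 + x * a) ^ (p - 2) * (1 + x * a) := by
      rw [← Real.rpow_add_one hx₀]; ring_nf
    rw [show p - 1 - 1 = p - 2 by ring, hsplit]
    field_simp
    ring
  have hcont : ContinuousOn (fun x ↦ x * (1 + x * a) ^ (p - 2)) (Set.uIcc 0 1) :=
    continuousOn_id.mul <| (by fun_prop : Continuous fun x : ℝ ↦ 1 + x * a).continuousOn.rpow_const
      fun x hx ↦ Or.inl (hpos x hx).ne'
  rw [intervalIntegral.integral_eq_sub_of_hasDerivAt hderiv hcont.intervalIntegrable]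
  norm_num [Real.one_rpow]
  field_simp
  ring

theorem tendsto_sub_one_div_self {α : Type*} {l : Filter α} {f : α → ℝ}
    (hf : Tendsto f l atTop) : Tendsto (fun a ↦ (f a - 1) / f a) l (𝓝 1) := by
  have h : Tendsto (fun a ↦ 1 - (f a)⁻¹) l (𝓝 (1 - 0)) :=
    tendsto_const_nhds.sub hf.inv_tendsto_atTop
  rw [sub_zero] at h
  refine h.congr' ?_
  filter_upwards [hf.eventually_ne_atTop 0] with a ha
  field_simp

theorem tendsto_mul_sub_one_div_of_tendsto_atTop {α : Type*} {l : Filter α} {X E : α → ℝ}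
    (hX : Tendsto X l atTop) (hE : Tendsto E l atTop) :
    Tendsto (fun a ↦ (X a * E a - 1) / ((X a - 1) * (E a - 1))) l (𝓝 1) := by
  have h := (tendsto_sub_one_div_self (hX.atTop_mul_atTop₀ hE)).div
    ((tendsto_sub_one_div_self hX).mul (tendsto_sub_one_div_self hE)) (by norm_num)
  rw [mul_one, div_one] at h
  refine h.congr' ?_
  filter_upwards [hX.eventually_ne_atTop 0, hE.eventually_ne_atTop 0] with a hXa hEa
  simp only [Pi.div_apply]
  field_simp

theorem tendsto_mul_sub_one_div_of_tendsto_zero {α : Type*} {l : Filter α} {X E : α → ℝ}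
    (hX : Tendsto X l atTop) (hE : Tendsto E l (𝓝 0)) :
    Tendsto (fun a ↦ (X a * E a - 1) / ((X a - 1) * (E a - 1))) l (𝓝 0) := by
  have h := (hE.sub hX.inv_tendsto_atTop).div
    ((tendsto_sub_one_div_self hX).mul (hE.sub_const 1)) (by norm_num)
  rw [sub_zero, zero_div] at h
  refine h.congr' ?_
  filter_upwards [hX.eventually_ne_atTop 0] with a hXa
  simp only [Pi.div_apply, Pi.inv_apply]
  field_simp

/-- The explicit solution `ν̃(t, x)` of Luo's equation started from the uniform density. -/
noncomputable def nuTilde (lam t x : ℝ) : ℝ :=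
  (exp t - 1) * (lam - 1) / (exp (t * (lam - 1)) - 1) * (1 + x * (exp t - 1)) ^ (lam - 2)

theorem nuTilde_one (lam t : ℝ) :
    nuTilde lam t 1
      = (lam - 1) * ((exp t - 1) / exp t / ((exp (t * (lam - 1)) - 1) / exp (t * (lam - 1)))) := by
  have hpow : (1 + 1 * (exp t - 1)) ^ (lam - 2) = exp (t * (lam - 1)) / exp t := by
    rw [one_mul, add_sub_cancel, ← Real.exp_mul, ← Real.exp_sub]
    ring_nf
  rw [nuTilde, hpow]
  field_simp

theorem integral_mul_nuTilde {lam t : ℝ} (hlam₀ : lam ≠ 0) (hlam₁ : lam ≠ 1) (ht : t ≠ 0) :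
    ∫ x in (0:ℝ)..1, x * nuTilde lam t x
      = (lam - 1) / lam * ((exp t * exp (t * (lam - 1)) - 1)
          / ((exp t - 1) * (exp (t * (lam - 1)) - 1))) - (exp t - 1)⁻¹ := by
  have hX : exp t - 1 ≠ 0 := sub_ne_zero.mpr ((Real.exp_eq_one_iff t).not.mpr ht)
  have hE : exp (t * (lam - 1)) - 1 ≠ 0 :=
    sub_ne_zero.mpr ((Real.exp_eq_one_iff _).not.mpr (mul_ne_zero ht (sub_ne_zero.mpr hlam₁)))
  simp only [nuTilde, mul_left_comm _ ((exp t - 1) * (lam - 1) / _)]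
  rw [intervalIntegral.integral_const_mul,
    integral_mul_one_add_mul_rpow hX (by linarith [exp_pos t]) hlam₀ hlam₁,
    add_sub_cancel, ← Real.exp_mul, ← Real.exp_mul,
    show exp (t * lam) = exp t * exp (t * (lam - 1)) by rw [← Real.exp_add]; ring_nf]
  generalize exp t = X at *
  generalize exp (t * (lam - 1)) = E at *
  field_simp

theorem stmt9_general (lam : ℝ) (hlam : 0 < lam) :
    (lam < 1 →
      Tendsto (fun t : ℝ => ∫ x in (0:ℝ)..1,
          x * ((Real.exp t - 1) * (lam - 1) / (Real.exp (t * (lam - 1)) - 1) *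
            (1 + x * (Real.exp t - 1)) ^ (lam - 2)))
        atTop (nhds 0)) ∧
    (1 < lam →
      Tendsto (fun t : ℝ =>
          (Real.exp t - 1) * (lam - 1) / (Real.exp (t * (lam - 1)) - 1) *
            (1 + 1 * (Real.exp t - 1)) ^ (lam - 2))
        atTop (nhds (lam - 1)) ∧
      Tendsto (fun t : ℝ => ∫ x in (0:ℝ)..1,
          x * ((Real.exp t - 1) * (lam - 1) / (Real.exp (t * (lam - 1)) - 1) *
            (1 + x * (Real.exp t - 1)) ^ (lam - 2)))
        atTop (nhds ((lam - 1) / lam))) := by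
  have hmean (hlam₁ : lam ≠ 1) : (fun t ↦ (lam - 1) / lam * ((exp t * exp (t * (lam - 1)) - 1)
      / ((exp t - 1) * (exp (t * (lam - 1)) - 1))) - (exp t - 1)⁻¹)
      =ᶠ[atTop] fun t ↦ ∫ x in (0:ℝ)..1, x * nuTilde lam t x := by
    filter_upwards [eventually_ne_atTop 0] with t ht
    exact (integral_mul_nuTilde hlam.ne' hlam₁ ht).symm
  have hinv : Tendsto (fun t ↦ (exp t - 1)⁻¹) atTop (𝓝 0) :=
    (tendsto_atTop_add_const_right _ (-1) tendsto_exp_atTop).inv_tendsto_atTop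
  refine ⟨fun hlt ↦ ?_, fun hgt ↦ ?_⟩
  · have hE : Tendsto (fun t ↦ exp (t * (lam - 1))) atTop (𝓝 0) :=
      tendsto_exp_comp_nhds_zero.mpr (tendsto_id.atTop_mul_const_of_neg (by linarith))
    have h := ((tendsto_mul_sub_one_div_of_tendsto_zero tendsto_exp_atTop hE).const_mul
      ((lam - 1) / lam)).sub hinv
    rw [mul_zero, sub_zero] at h
    exact h.congr' (hmean hlt.ne)
  · have hE : Tendsto (fun t ↦ exp (t * (lam - 1))) atTop atTop :=
      tendsto_exp_atTop.comp (tendsto_id.atTop_mul_const (by linarith))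
    have hone := ((tendsto_sub_one_div_self tendsto_exp_atTop).div
      (tendsto_sub_one_div_self hE) one_ne_zero).const_mul (lam - 1)
    have h := ((tendsto_mul_sub_one_div_of_tendsto_atTop tendsto_exp_atTop hE).const_mul
      ((lam - 1) / lam)).sub hinv
    rw [div_one, mul_one] at hone
    rw [mul_one, sub_zero] at h
    exact ⟨hone.congr fun t ↦ (nuTilde_one lam t).symm, h.congr' (hmean hgt.ne')⟩

/-- For λ > 0, λ ≠ 1, and
ν̃(t,x) = [(e^t−1)(λ−1)/(e^{t(λ−1)}−1)]·(1+x(e^t−1))^{λ−2}: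
if λ < 1 then ∫₀¹ x ν̃(t,x)dx → 0; if λ > 1 then ν̃(t,1) → λ−1 and
∫₀¹ x ν̃(t,x)dx → (λ−1)/λ, as t → ∞. -/
theorem stmt9 (lam : ℝ) (hlam : 0 < lam) (hne : lam ≠ 1) :
    (lam < 1 →
      Tendsto (fun t : ℝ => ∫ x in (0:ℝ)..1,
          x * ((Real.exp t - 1) * (lam - 1) / (Real.exp (t * (lam - 1)) - 1) *
            (1 + x * (Real.exp t - 1)) ^ (lam - 2)))
        atTop (nhds 0)) ∧
    (1 < lam →
      Tendsto (fun t : ℝ =>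
          (Real.exp t - 1) * (lam - 1) / (Real.exp (t * (lam - 1)) - 1) *
            (1 + 1 * (Real.exp t - 1)) ^ (lam - 2))
        atTop (nhds (lam - 1)) ∧
      Tendsto (fun t : ℝ => ∫ x in (0:ℝ)..1,
          x * ((Real.exp t - 1) * (lam - 1) / (Real.exp (t * (lam - 1)) - 1) *
            (1 + x * (Real.exp t - 1)) ^ (lam - 2)))
        atTop (nhds ((lam - 1) / lam))) :=
  stmt9_general lam hlam
end

section
/- Consider the ODE dx₁/dt = x₁·[(1−x₁) − (v_M/2)(1−x₁)²] with v_M > 0 and x₁(0) ∈ (0,1). If v_M < 2/(1−x₁(0)) then x₁(t) → 1 as t → ∞; if v_M > 2/(1−x₁(0)) then x₁(t) → 0 as t → ∞. -/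
/-!
With `c = 1 - 2 / v` the field factors as `(v / 2) x (1 - x) (x - c)`, so `0`, `c`, `1` are
equilibria, and `v < 2 / (1 - x 0)` says exactly that `x 0 > c`. Each of `x`, `1 - x` and
`x - c` solves a linear equation `u' = u g(t)` and so keeps its sign; hence the field has a fixed
sign along the solution, which is monotone and bounded. It converges, and its limit must be an
equilibrium, which leaves only `1` (resp. `0`).
-/

open Set Filter Topology Real

theorem exists_eq_mul_exp_of_hasDerivAt_mul {u g : ℝ → ℝ} (hg : ContinuousOn g (Ici 0))
    (hu : ∀ t, 0 ≤ t → HasDerivAt u (u t * g t) t) :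
    ∃ H : ℝ → ℝ, ∀ t, 0 ≤ t → u t = u 0 * exp (H t) := by
  -- extending `g` by `g 0` to the left makes it continuous, so that FTC applies
  set G : ℝ → ℝ := fun t ↦ g (max t 0)
  have hG : Continuous G :=
    hg.comp_continuous (continuous_id.max continuous_const) fun t ↦ le_max_right t 0
  set H : ℝ → ℝ := fun t ↦ ∫ s in (0 : ℝ)..t, G s
  refine ⟨H, fun t ht ↦ ?_⟩
  have hw : ∀ s ∈ Ico 0 t, HasDerivWithinAt (fun r ↦ u r * exp (-H r)) 0 (Ici s) s := by
    intro s hs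
    have hH : HasDerivAt H (g s) s := by
      simpa [G, max_eq_left hs.1] using (hG.integral_hasStrictDerivAt 0 s).hasDerivAt
    refine (((hu s hs.1).mul hH.neg.exp).congr_deriv ?_).hasDerivWithinAt
    ring
  have hconst : u t * exp (-H t) = u 0 * exp (-H 0) := constant_of_has_deriv_right_zero
    (fun s hs ↦ ((hu s hs.1).continuousAt.mul (by fun_prop)).continuousWithinAt) hw t ⟨ht, le_rfl⟩
  rw [show H 0 = 0 from intervalIntegral.integral_same, neg_zero, exp_zero, mul_one] at hconst
  rw [← hconst, mul_assoc, ← exp_add, neg_add_cancel, exp_zero, mul_one]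

theorem pos_of_hasDerivAt_mul {u g : ℝ → ℝ} (hg : ContinuousOn g (Ici 0))
    (hu : ∀ t, 0 ≤ t → HasDerivAt u (u t * g t) t) (h0 : 0 < u 0) {t : ℝ} (ht : 0 ≤ t) :
    0 < u t := by
  obtain ⟨H, hH⟩ := exists_eq_mul_exp_of_hasDerivAt_mul hg hu
  rw [hH t ht]
  positivity

theorem nonpos_of_tendsto_of_hasDerivAt {f f' : ℝ → ℝ} {L l : ℝ} (hf : Tendsto f atTop (𝓝 L))
    (hd : ∀ᶠ t in atTop, HasDerivAt f (f' t) t) (hl : Tendsto f' atTop (𝓝 l)) : l ≤ 0 := by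
  by_contra! hpos
  obtain ⟨T, hT⟩ := eventually_atTop.1 (hd.and (hl.eventually (lt_mem_nhds (half_lt_self hpos))))
  have hstep : ∀ t, T ≤ t → l / 2 ≤ f (t + 1) - f t := by
    intro t ht
    obtain ⟨c, hc, hfc⟩ := exists_hasDerivAt_eq_slope f f' (lt_add_one t)
      (fun s hs ↦ (hT s (ht.trans hs.1)).1.continuousAt.continuousWithinAt)
      (fun s hs ↦ (hT s (ht.trans hs.1.le)).1)
    rw [add_sub_cancel_left, div_one] at hfc
    exact hfc ▸ (hT c (ht.trans hc.1.le)).2.le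
  have hdiff : Tendsto (fun t ↦ f (t + 1) - f t) atTop (𝓝 0) := by
    simpa using (hf.comp (tendsto_atTop_add_const_right _ 1 tendsto_id)).sub hf
  have := ge_of_tendsto hdiff (eventually_atTop.2 ⟨T, hstep⟩)
  linarith

theorem eq_zero_of_tendsto_of_hasDerivAt {f f' : ℝ → ℝ} {L l : ℝ} (hf : Tendsto f atTop (𝓝 L))
    (hd : ∀ᶠ t in atTop, HasDerivAt f (f' t) t) (hl : Tendsto f' atTop (𝓝 l)) : l = 0 :=
  le_antisymm (nonpos_of_tendsto_of_hasDerivAt hf hd hl)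
    (neg_nonpos.1 (nonpos_of_tendsto_of_hasDerivAt hf.neg (hd.mono fun _ h ↦ h.neg) hl.neg))

theorem MonotoneOn.exists_tendsto_atTop {α β : Type*} [LinearOrder α]
    [ConditionallyCompleteLinearOrder β] [TopologicalSpace β] [OrderTopology β]
    {f : α → β} {a : α} {b : β} (hf : MonotoneOn f (Ici a)) (hb : ∀ t, a ≤ t → f t ≤ b) :
    ∃ L, Tendsto f atTop (𝓝 L) := by
  have hmono : Monotone fun t ↦ f (max t a) := fun s t hst ↦
    hf (le_max_right s a) (le_max_right t a) (max_le_max hst le_rfl)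
  refine ⟨_, (tendsto_atTop_ciSup hmono ⟨b, ?_⟩).congr' ?_⟩
  · rintro _ ⟨t, rfl⟩
    exact hb _ (le_max_right t a)
  · filter_upwards [eventually_ge_atTop a] with t ht
    rw [max_eq_left ht]

theorem AntitoneOn.exists_tendsto_atTop {α β : Type*} [LinearOrder α]
    [ConditionallyCompleteLinearOrder β] [TopologicalSpace β] [OrderTopology β]
    {f : α → β} {a : α} {b : β} (hf : AntitoneOn f (Ici a)) (hb : ∀ t, a ≤ t → b ≤ f t) :
    ∃ L, Tendsto f atTop (𝓝 L) :=
  MonotoneOn.exists_tendsto_atTop (β := βᵒᵈ) hf.dual_right (b := OrderDual.toDual b) hb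

noncomputable def mutualismField (v y : ℝ) : ℝ := y * ((1 - y) - v / 2 * (1 - y) ^ 2)

noncomputable def mutualismThreshold (v : ℝ) : ℝ := 1 - 2 / v

def IsMutualismSolution (v : ℝ) (x : ℝ → ℝ) : Prop :=
  ∀ t, 0 ≤ t → HasDerivAt x (mutualismField v (x t)) t

section MutualismField

variable {v y : ℝ}

theorem mutualismField_eq (hv : v ≠ 0) (y : ℝ) :
    mutualismField v y = v / 2 * y * (1 - y) * (y - mutualismThreshold v) := by
  unfold mutualismField mutualismThreshold
  field_simp
  ring

theorem continuous_mutualismField : Continuous (mutualismField v) := by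
  unfold mutualismField
  fun_prop

theorem mutualismField_pos (hv : 0 < v) (h0 : 0 < y) (h1 : y < 1)
    (hy : mutualismThreshold v < y) : 0 < mutualismField v y := by
  rw [mutualismField_eq hv.ne']
  have := sub_pos.2 h1
  have := sub_pos.2 hy
  positivity

theorem mutualismField_neg (hv : 0 < v) (h0 : 0 < y) (h1 : y < 1)
    (hy : y < mutualismThreshold v) : mutualismField v y < 0 := by
  rw [mutualismField_eq hv.ne']
  exact mul_neg_of_pos_of_neg (by have := sub_pos.2 h1; positivity) (sub_neg.2 hy)

theorem mutualismField_eq_zero_iff (hv : 0 < v) :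
    mutualismField v y = 0 ↔ y = 0 ∨ y = 1 ∨ y = mutualismThreshold v := by
  rw [mutualismField_eq hv.ne']
  simp [hv.ne', sub_eq_zero, eq_comm (a := (1 : ℝ)), or_assoc]

theorem mutualismThreshold_lt_iff (hv : 0 < v) (hy : y < 1) :
    mutualismThreshold v < y ↔ v < 2 / (1 - y) := by
  rw [mutualismThreshold, sub_lt_comm, lt_div_iff₀ hv, lt_div_iff₀ (sub_pos.2 hy), mul_comm]

theorem lt_mutualismThreshold_iff (hv : 0 < v) (hy : y < 1) :
    y < mutualismThreshold v ↔ 2 / (1 - y) < v := by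
  rw [mutualismThreshold, lt_sub_comm, div_lt_iff₀ hv, div_lt_iff₀ (sub_pos.2 hy), mul_comm]

end MutualismField

namespace IsMutualismSolution

variable {v L t : ℝ} {x : ℝ → ℝ}

theorem continuousOn (hx : IsMutualismSolution v x) : ContinuousOn x (Ici 0) :=
  continuousOn_of_forall_continuousAt fun t ht ↦ (hx t ht).continuousAt

theorem pos (hx : IsMutualismSolution v x) (h0 : 0 < x 0) (ht : 0 ≤ t) : 0 < x t :=
  pos_of_hasDerivAt_mul (g := fun t ↦ (1 - x t) - v / 2 * (1 - x t) ^ 2)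
    (by have := hx.continuousOn; fun_prop) hx h0 ht

theorem lt_one (hx : IsMutualismSolution v x) (h1 : x 0 < 1) (ht : 0 ≤ t) : x t < 1 :=
  sub_pos.1 <| pos_of_hasDerivAt_mul (u := fun t ↦ 1 - x t)
    (g := fun t ↦ -x t * (1 - v / 2 * (1 - x t))) (by have := hx.continuousOn; fun_prop)
    (fun s hs ↦ ((hx s hs).const_sub 1).congr_deriv (by unfold mutualismField; ring))
    (sub_pos.2 h1) ht

theorem threshold_lt (hx : IsMutualismSolution v x) (hv : v ≠ 0)
    (h : mutualismThreshold v < x 0) (ht : 0 ≤ t) : mutualismThreshold v < x t :=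
  sub_pos.1 <| pos_of_hasDerivAt_mul (u := fun t ↦ x t - mutualismThreshold v)
    (g := fun t ↦ v / 2 * x t * (1 - x t)) (by have := hx.continuousOn; fun_prop)
    (fun s hs ↦ ((hx s hs).sub_const _).congr_deriv (by rw [mutualismField_eq hv]; ring))
    (sub_pos.2 h) ht

theorem lt_threshold (hx : IsMutualismSolution v x) (hv : v ≠ 0)
    (h : x 0 < mutualismThreshold v) (ht : 0 ≤ t) : x t < mutualismThreshold v :=
  sub_pos.1 <| pos_of_hasDerivAt_mul (u := fun t ↦ mutualismThreshold v - x t)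
    (g := fun t ↦ v / 2 * x t * (1 - x t)) (by have := hx.continuousOn; fun_prop)
    (fun s hs ↦ ((hx s hs).const_sub _).congr_deriv (by rw [mutualismField_eq hv]; ring))
    (sub_pos.2 h) ht

theorem eq_zero_or_eq_one_or_eq_threshold_of_tendsto (hx : IsMutualismSolution v x)
    (hv : 0 < v) (hL : Tendsto x atTop (𝓝 L)) : L = 0 ∨ L = 1 ∨ L = mutualismThreshold v :=
  (mutualismField_eq_zero_iff hv).1 <| eq_zero_of_tendsto_of_hasDerivAt hL
    (eventually_atTop.2 ⟨0, hx⟩) ((continuous_mutualismField.tendsto L).comp hL)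

theorem tendsto_one_of_threshold_lt (hx : IsMutualismSolution v x) (hv : 0 < v)
    (h0 : 0 < x 0) (h1 : x 0 < 1) (h : mutualismThreshold v < x 0) :
    Tendsto x atTop (𝓝 1) := by
  have hmono : MonotoneOn x (Ici 0) :=
    monotoneOn_of_hasDerivWithinAt_nonneg (convex_Ici 0) hx.continuousOn
      (fun t ht ↦ (hx t (interior_subset ht)).hasDerivWithinAt) fun t ht ↦
      (mutualismField_pos hv (hx.pos h0 (interior_subset ht)) (hx.lt_one h1 (interior_subset ht))
        (hx.threshold_lt hv.ne' h (interior_subset ht))).le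
  obtain ⟨L, hL⟩ := hmono.exists_tendsto_atTop fun t ht ↦ (hx.lt_one h1 ht).le
  have hx0L : x 0 ≤ L :=
    ge_of_tendsto hL (eventually_atTop.2 ⟨0, fun t ht ↦ hmono self_mem_Ici ht ht⟩)
  rcases hx.eq_zero_or_eq_one_or_eq_threshold_of_tendsto hv hL with rfl | rfl | rfl
  · linarith
  · exact hL
  · linarith

theorem tendsto_zero_of_lt_threshold (hx : IsMutualismSolution v x) (hv : 0 < v)
    (h0 : 0 < x 0) (h1 : x 0 < 1) (h : x 0 < mutualismThreshold v) :
    Tendsto x atTop (𝓝 0) := by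
  have hanti : AntitoneOn x (Ici 0) :=
    antitoneOn_of_hasDerivWithinAt_nonpos (convex_Ici 0) hx.continuousOn
      (fun t ht ↦ (hx t (interior_subset ht)).hasDerivWithinAt) fun t ht ↦
      (mutualismField_neg hv (hx.pos h0 (interior_subset ht)) (hx.lt_one h1 (interior_subset ht))
        (hx.lt_threshold hv.ne' h (interior_subset ht))).le
  obtain ⟨L, hL⟩ := hanti.exists_tendsto_atTop fun t ht ↦ (hx.pos h0 ht).le
  have hLx0 : L ≤ x 0 :=
    le_of_tendsto hL (eventually_atTop.2 ⟨0, fun t ht ↦ hanti self_mem_Ici ht ht⟩)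
  rcases hx.eq_zero_or_eq_one_or_eq_threshold_of_tendsto hv hL with rfl | rfl | rfl
  · exact hL
  · linarith
  · linarith

end IsMutualismSolution

/-- For dx/dt = x[(1−x) − (v_M/2)(1−x)²] with v_M > 0 and
x(0) ∈ (0,1): if v_M < 2/(1−x(0)) then x(t) → 1, and if v_M > 2/(1−x(0))
then x(t) → 0, as t → ∞. -/
theorem stmt11 (v : ℝ) (hv : 0 < v) (x : ℝ → ℝ) (hx0 : x 0 ∈ Set.Ioo (0:ℝ) 1)
    (hode : ∀ t : ℝ, 0 ≤ t →
      HasDerivAt x (x t * ((1 - x t) - v / 2 * (1 - x t)^2)) t) :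
    (v < 2 / (1 - x 0) → Filter.Tendsto x Filter.atTop (nhds 1)) ∧
    (2 / (1 - x 0) < v → Filter.Tendsto x Filter.atTop (nhds 0)) := by
  have hx : IsMutualismSolution v x := hode
  obtain ⟨h0, h1⟩ := hx0
  exact ⟨fun h ↦ hx.tendsto_one_of_threshold_lt hv h0 h1 ((mutualismThreshold_lt_iff hv h1).2 h),
    fun h ↦ hx.tendsto_zero_of_lt_threshold hv h0 h1 ((lt_mutualismThreshold_iff hv h1).2 h)⟩
end

section
/- Multilevel coalescent, part (b): consider the chain with migration of a single lineage from a site with nᵢ ≥ 2 lineages to a new site at rate c·nᵢ, within-site coalescence at rate γ₁nᵢ(nᵢ−1), and no site merging (γ₂ = 0), with c, γ₁ > 0. Started from (k₀,(n₁,...,n_{k₀})) with k₀ < ∞ and ∑nᵢ < ∞, the chain almost surely reaches in finite time an absorbing state of the form (k̃,(1,...,1)) for some random k̃ with k₀ ≤ k̃ ≤ ∑nᵢ. -/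
/-!
Each site with `n ≥ 1` lineages contributes `2n - 1` to a potential; a migration lowers
it by one and a coalescence by two, so every path of transitions is finite. Along a path
the number of sites never decreases and the number of lineages never increases, and a
state admitting no transition can only have single lineages at all its sites, so its
number of sites equals its number of lineages.
-/

/-- Jump transitions of the multilevel coalescent with c, γ₁ > 0 and γ₂ = 0.
A state is the multiset of lineage counts at the occupied sites.  Migration
(rate c·nᵢ·1_{nᵢ>1} > 0 iff nᵢ ≥ 2) moves one lineage from a site with n ≥ 2
lineages to a new site; within-site coalescence (rate γ₁n(n−1) > 0 iff n ≥ 2)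
replaces a count n ≥ 2 by n − 1. -/
inductive CoalStepB : Multiset ℕ → Multiset ℕ → Prop
  | migrate (n : ℕ) (s : Multiset ℕ) (hn : 2 ≤ n) :
      CoalStepB (n ::ₘ s) ((n - 1) ::ₘ 1 ::ₘ s)
  | coal (n : ℕ) (s : Multiset ℕ) (hn : 2 ≤ n) :
      CoalStepB (n ::ₘ s) ((n - 1) ::ₘ s)

namespace CoalStepB

def potential (m : Multiset ℕ) : ℕ :=
  (m.map fun n => 2 * n - 1).sum

variable {a b : Multiset ℕ}

theorem potential_lt (h : CoalStepB a b) : potential b < potential a := by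
  cases h <;> simp only [potential, Multiset.map_cons, Multiset.sum_cons] <;> omega

theorem wellFounded_swap : WellFounded (fun a b => CoalStepB b a) :=
  Subrelation.wf potential_lt (measure potential).wf

theorem card_le (h : CoalStepB a b) : Multiset.card a ≤ Multiset.card b := by
  cases h <;> simp

theorem sum_le (h : CoalStepB a b) : b.sum ≤ a.sum := by
  cases h <;> simp only [Multiset.sum_cons] <;> omega

theorem one_le_of_mem (h : CoalStepB a b) (ha : ∀ n ∈ a, 1 ≤ n) : ∀ n ∈ b, 1 ≤ n := by
  cases h with
  | migrate n s hn =>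
    simp only [Multiset.mem_cons, forall_eq_or_imp] at ha ⊢
    exact ⟨by omega, le_rfl, ha.2⟩
  | coal n s hn =>
    simp only [Multiset.mem_cons, forall_eq_or_imp] at ha ⊢
    exact ⟨by omega, ha.2⟩

theorem eq_one_of_forall_not (ha : ∀ n ∈ a, 1 ≤ n) (hstuck : ∀ b, ¬ CoalStepB a b) :
    ∀ n ∈ a, n = 1 := by
  intro n hn
  by_contra hne
  obtain ⟨s, rfl⟩ := Multiset.exists_cons_of_mem hn
  exact hstuck _ (.coal n s (by have := ha n hn; omega))

theorem card_le_of_reflTransGen (h : Relation.ReflTransGen CoalStepB a b) :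
    Multiset.card a ≤ Multiset.card b := by
  induction h with
  | refl => exact le_rfl
  | tail _ hstep ih => exact ih.trans hstep.card_le

theorem sum_le_of_reflTransGen (h : Relation.ReflTransGen CoalStepB a b) :
    b.sum ≤ a.sum := by
  induction h with
  | refl => exact le_rfl
  | tail _ hstep ih => exact hstep.sum_le.trans ih

theorem one_le_of_reflTransGen (h : Relation.ReflTransGen CoalStepB a b)
    (ha : ∀ n ∈ a, 1 ≤ n) : ∀ n ∈ b, 1 ≤ n := by
  induction h with
  | refl => exact ha
  | tail _ hstep ih => exact hstep.one_le_of_mem ih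

end CoalStepB

theorem stmt16_general
    (init : Multiset ℕ) (hpos : ∀ n ∈ init, 1 ≤ n) :
    Acc (fun a b => CoalStepB b a) init ∧
    ∀ m : Multiset ℕ, Relation.ReflTransGen CoalStepB init m →
      (∀ m', ¬ CoalStepB m m') →
      (∀ n ∈ m, n = 1) ∧
        Multiset.card init ≤ Multiset.card m ∧ Multiset.card m ≤ init.sum := by
  refine ⟨CoalStepB.wellFounded_swap.apply init, fun m hreach hstuck => ?_⟩
  have hones : ∀ n ∈ m, n = 1 :=
    CoalStepB.eq_one_of_forall_not (CoalStepB.one_le_of_reflTransGen hreach hpos) hstuck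
  have hsum : m.sum = Multiset.card m := by
    rw [Multiset.eq_replicate_card.2 hones]
    simp
  exact ⟨hones, CoalStepB.card_le_of_reflTransGen hreach,
    hsum ▸ CoalStepB.sum_le_of_reflTransGen hreach⟩

/-- with c, γ₁ > 0 and γ₂ = 0, from any initial state
(k₀,(n₁,…,n_{k₀})) with k₀ < ∞ sites and ∑nᵢ < ∞ lineages, the chain reaches in
finite time (a.s., since there is no infinite chain of transitions and all
rates are positive) an absorbing state of the form (k̃,(1,…,1)) with
k₀ ≤ k̃ ≤ ∑nᵢ. -/
theorem stmt16 (c γ1 : ℝ) (hc : 0 < c) (h1 : 0 < γ1)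
    (init : Multiset ℕ) (hpos : ∀ n ∈ init, 1 ≤ n) (hne : init ≠ 0) :
    Acc (fun a b => CoalStepB b a) init ∧
    ∀ m : Multiset ℕ, Relation.ReflTransGen CoalStepB init m →
      (∀ m', ¬ CoalStepB m m') →
      (∀ n ∈ m, n = 1) ∧
        Multiset.card init ≤ Multiset.card m ∧ Multiset.card m ≤ init.sum :=
  stmt16_general init hpos
end
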